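/- Fix real constants p > 2, β > 0, Λ > 0 and T > 0. Let V₋ = {(u,v) ∈ ℝ² : u ≥ 0, 0 ≤ v ≤ 2pu/β}. Let X : [0,T] → ℝ² be continuously differentiable and satisfy Condition I with X(0) in the interior of V₋, and let A_L, A_U : [0,T] → ℝ² be solutions of A_L' = Φ_L(A_L), A_U' = Φ_U(A_U) with A_L(0) = A_U(0) = X(0). Define the exit times τ = inf{t : X(t) ∉ V₋}, τᴸ = inf{t : A_L(t) ∉ V₋}, τᵁ = inf{t : A_U(t) ∉ V₋}, and τ^□ = inf{t : (A_{L,1}(t), A_{U,2}(t)) ∉ V₋}, each taken equal to T if the corresponding set is empty. Then: (1) X₁(t) ≥ A_{L,1}(t) and X₂(t) ≥ A_{L,2}(t) for every t ≤ min(τᴸ, τ), and X₁(t) ≤ A_{U,1}(t) and X₂(t) ≤ A_{U,2}(t) for every t ≤ min(τᵁ, τ); (2) A_L(t) ≤ X(t) ≤ A_U(t) componentwise for every t ≤ τ^□. -/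

import Mathlib

open Set

/-- `F₁(u,v) = -p·u + β·v`. -/
noncomputable def F1 (p β : ℝ) (z : ℝ × ℝ) : ℝ := -p * z.1 + β * z.2

/-- `F₂ᴸ(u,v) = 2p(p-1) - 2(p-1)v + 2pu(pu - βv) - 2βΛv`. -/
noncomputable def F2L (p β Λ : ℝ) (z : ℝ × ℝ) : ℝ :=
  2 * p * (p - 1) - 2 * (p - 1) * z.2 + 2 * p * z.1 * (p * z.1 - β * z.2) - 2 * β * Λ * z.2

/-- `F₂ᵁ(u,v) = 2p(p-1) - 2(p-1)v + 2pu(pu - βv) + 2βΛv`. -/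
noncomputable def F2U (p β Λ : ℝ) (z : ℝ × ℝ) : ℝ :=
  2 * p * (p - 1) - 2 * (p - 1) * z.2 + 2 * p * z.1 * (p * z.1 - β * z.2) + 2 * β * Λ * z.2

/-- The lower bounding vector field `Φ_L = (F₁, F₂ᴸ)`. -/
noncomputable def PhiL (p β Λ : ℝ) (z : ℝ × ℝ) : ℝ × ℝ := (F1 p β z, F2L p β Λ z)

/-- The upper bounding vector field `Φ_U = (F₁, F₂ᵁ)`. -/
noncomputable def PhiU (p β Λ : ℝ) (z : ℝ × ℝ) : ℝ × ℝ := (F1 p β z, F2U p β Λ z)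

/-- **Condition I**: `U : [0,T] → ℝ²` is `C¹` with derivative `U'` satisfying
`U₁' = F₁(U)` and `F₂ᴸ(U) ≤ U₂' ≤ F₂ᵁ(U)` on `[0,T]`. -/
def CondI (p β Λ T : ℝ) (U U' : ℝ → ℝ × ℝ) : Prop :=
  (∀ t ∈ Icc (0 : ℝ) T, HasDerivWithinAt U (U' t) (Icc (0 : ℝ) T) t) ∧
  ContinuousOn U' (Icc (0 : ℝ) T) ∧
  (∀ t ∈ Icc (0 : ℝ) T, (U' t).1 = F1 p β (U t)) ∧
  (∀ t ∈ Icc (0 : ℝ) T, F2L p β Λ (U t) ≤ (U' t).2 ∧ (U' t).2 ≤ F2U p β Λ (U t))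

/-- The region `V₋ = {(u,v) : u ≥ 0, 0 ≤ v ≤ 2pu/β}` on which `Φ_L` and `Φ_U`
are quasi-increasing. -/
def Vminus (p β : ℝ) : Set (ℝ × ℝ) :=
  {z : ℝ × ℝ | 0 ≤ z.1 ∧ 0 ≤ z.2 ∧ z.2 ≤ 2 * p * z.1 / β}

/-!
Both bounding fields are quasi-monotone where it matters: `F₁` is increasing in `v`, and
`∂F₂/∂u = 2p(2pu - βv) ≥ 0` on `V₋`. Each component of the gaps `A_L - X` and `X - A_U` is compared
with the barrier `ε e^{Kt}`: at the first time a component touches it while all others stay below,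
quasi-monotonicity together with a Lipschitz bound on the (compact) trajectories forces that
component to grow more slowly than the barrier, which is impossible; then let `ε → 0`. Up to the
exit times the lower curve stays in `V₋`. For part (2) only the mixed point `(A_{L,1}, A_{U,2})` is
known to lie in `V₋`, which gives `βv ≤ 2pu` for the lower curves up to an error proportional to
the gap, and the four gap components are treated simultaneously.
-/

open Real

section Prod

variable {𝕜 E F : Type*} [NontriviallyNormedField 𝕜] [NormedAddCommGroup E] [NormedSpace 𝕜 E]
  [NormedAddCommGroup F] [NormedSpace 𝕜 F] {f : 𝕜 → E × F} {f' : E × F} {s : Set 𝕜} {x : 𝕜}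

theorem HasDerivWithinAt.fst (h : HasDerivWithinAt f f' s x) :
    HasDerivWithinAt (fun t => (f t).1) f'.1 s x :=
  (ContinuousLinearMap.fst 𝕜 E F).hasFDerivAt.comp_hasDerivWithinAt x h

theorem HasDerivWithinAt.snd (h : HasDerivWithinAt f f' s x) :
    HasDerivWithinAt (fun t => (f t).2) f'.2 s x :=
  (ContinuousLinearMap.snd 𝕜 E F).hasFDerivAt.comp_hasDerivWithinAt x h

end Prod

theorem IsCompact.exists_bound_of_forall_continuousOn {ι X E : Type*} [Finite ι]
    [TopologicalSpace X] [SeminormedAddCommGroup E] {s : Set X} (hs : IsCompact s) {f : ι → X → E}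
    (hf : ∀ i, ContinuousOn (f i) s) : ∃ M, ∀ i, ∀ x ∈ s, ‖f i x‖ ≤ M := by
  choose M hM using fun i => hs.exists_bound_of_continuousOn (hf i)
  obtain ⟨M₀, hM₀⟩ := (Set.finite_range M).bddAbove
  exact ⟨M₀, fun i x hx => (hM i x hx).trans (hM₀ ⟨i, rfl⟩)⟩

theorem IsMaxOn.nonneg_of_hasDerivWithinAt_Icc {f : ℝ → ℝ} {f' a b : ℝ} (hab : a < b)
    (hmax : IsMaxOn f (Icc a b) b) (hf : HasDerivWithinAt f f' (Icc a b) b) : 0 ≤ f' := by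
  have hcone : a - b ∈ posTangentConeAt (Icc a b) b :=
    sub_mem_posTangentConeAt_of_segment_subset (by rw [segment_symm, segment_eq_Icc hab.le])
  have h := hmax.localize.hasFDerivWithinAt_nonpos hf.hasFDerivWithinAt hcone
  simp only [ContinuousLinearMap.toSpanSingleton_apply, smul_eq_mul] at h
  nlinarith

theorem lt_of_hasDerivWithinAt_of_touch {ι : Type*} [Finite ι] {a b : ℝ} {φ φ' : ι → ℝ → ℝ}
    {B B' : ℝ → ℝ} (hφ : ∀ i, ∀ t ∈ Icc a b, HasDerivWithinAt (φ i) (φ' i t) (Icc a b) t)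
    (hB : ∀ t ∈ Icc a b, HasDerivWithinAt B (B' t) (Icc a b) t) (ha : ∀ i, φ i a < B a)
    (hbound : ∀ t ∈ Ioc a b, ∀ i, φ i t = B t → (∀ j, φ j t ≤ B t) → φ' i t < B' t) :
    ∀ t ∈ Icc a b, ∀ i, φ i t < B t := by
  have hψ : ∀ i, ContinuousOn (fun t => φ i t - B t) (Icc a b) := fun i t ht =>
    ((hφ i t ht).sub (hB t ht)).continuousWithinAt
  by_contra! ⟨t, ht, i, hi⟩
  set E := ⋃ i, Icc a b ∩ (fun t => φ i t - B t) ⁻¹' Ici 0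
  have hE : IsCompact E := isCompact_iUnion fun i => isCompact_Icc.of_isClosed_subset
    ((hψ i).preimage_isClosed_of_isClosed isClosed_Icc isClosed_Ici) inter_subset_left
  obtain ⟨t₀, ht₀E, ht₀least⟩ := hE.exists_isLeast ⟨t, mem_iUnion.2 ⟨i, ht, sub_nonneg.2 hi⟩⟩
  obtain ⟨i₀, ht₀, hi₀⟩ := mem_iUnion.1 ht₀E
  rw [mem_preimage, mem_Ici, sub_nonneg] at hi₀
  have hat₀ : a < t₀ := ht₀.1.lt_of_ne fun h => (ha i₀).not_ge (h ▸ hi₀)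
  have hsub : Icc a t₀ ⊆ Icc a b := Icc_subset_Icc_right ht₀.2
  have hle : ∀ j, ∀ s ∈ Icc a t₀, φ j s ≤ B s := by
    intro j
    rw [← closure_Ico hat₀.ne]
    refine le_on_closure (fun s hs => ?_) ?_ ?_
    · by_contra! h
      exact hs.2.not_ge
        (ht₀least (mem_iUnion.2 ⟨j, ⟨hs.1, hs.2.le.trans ht₀.2⟩, sub_nonneg.2 h.le⟩))
    · rw [closure_Ico hat₀.ne]; exact fun s hs => (hφ j s (hsub hs)).continuousWithinAt.mono hsub
    · rw [closure_Ico hat₀.ne]; exact fun s hs => (hB s (hsub hs)).continuousWithinAt.mono hsub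
  have heq : φ i₀ t₀ = B t₀ := (hle i₀ t₀ (right_mem_Icc.2 hat₀.le)).antisymm hi₀
  have hmax : IsMaxOn (fun s => φ i₀ s - B s) (Icc a t₀) t₀ := fun s hs => by
    show φ i₀ s - B s ≤ φ i₀ t₀ - B t₀
    linarith [hle i₀ s hs]
  have hderiv := hmax.nonneg_of_hasDerivWithinAt_Icc hat₀
    (((hφ i₀ t₀ ht₀).sub (hB t₀ ht₀)).mono hsub)
  have := hbound t₀ ⟨hat₀, ht₀.2⟩ i₀ heq fun j => hle j t₀ (right_mem_Icc.2 hat₀.le)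
  linarith

theorem nonpos_of_hasDerivWithinAt_of_touch {ι : Type*} [Finite ι] {a b L : ℝ} {φ φ' : ι → ℝ → ℝ}
    (hφ : ∀ i, ∀ t ∈ Icc a b, HasDerivWithinAt (φ i) (φ' i t) (Icc a b) t) (ha : ∀ i, φ i a ≤ 0)
    (hbound : ∀ t ∈ Icc a b, ∀ η > 0, ∀ i, φ i t = η → (∀ j, φ j t ≤ η) → φ' i t ≤ L * η) :
    ∀ t ∈ Icc a b, ∀ i, φ i t ≤ 0 := by
  intro t ht i
  by_contra! hpos
  -- the barrier `s ↦ ε e^{(L+1)(s-a)}` passes through `φ i t` at time `t`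
  set ε := φ i t / exp ((L + 1) * (t - a))
  have hε : 0 < ε := by positivity
  set B := fun s => ε * exp ((L + 1) * (s - a))
  have hB : ∀ s ∈ Icc a b, HasDerivWithinAt B ((L + 1) * B s) (Icc a b) s := fun s _ =>
    ((((hasDerivAt_id s).sub_const a).const_mul (L + 1)).exp.const_mul ε).hasDerivWithinAt
      |>.congr_deriv (by simp only [B, id]; ring)
  have hlt := lt_of_hasDerivWithinAt_of_touch hφ hB (fun j => by simpa [B] using (ha j).trans_lt hε)
    (fun s hs j hj hle => by
      have hBs : 0 < B s := by positivity
      linarith [hbound s (Ioc_subset_Icc_self hs) (B s) hBs j hj hle]) t ht i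
  simp only [B, ε, div_mul_cancel₀ _ (exp_pos _).ne'] at hlt
  exact hlt.false

noncomputable def exitTime {α : Type*} (V : Set α) (Y : ℝ → α) (T : ℝ) : ℝ :=
  sInf ({t ∈ Icc (0 : ℝ) T | Y t ∉ V} ∪ {T})

section exitTime

variable {α : Type*} {V : Set α} {Y : ℝ → α} {T : ℝ}

theorem bddBelow_exitTime_set : BddBelow ({t ∈ Icc (0 : ℝ) T | Y t ∉ V} ∪ {T}) :=
  (bddBelow_Icc.mono (sep_subset _ _)).union bddBelow_singleton

theorem exitTime_le : exitTime V Y T ≤ T :=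
  csInf_le bddBelow_exitTime_set (Or.inr rfl)

theorem mem_of_mem_Icc_exitTime [TopologicalSpace α] (hV : IsClosed V)
    (hY : ContinuousOn Y (Icc 0 T)) (hY0 : Y 0 ∈ V) {t : ℝ} (ht : t ∈ Icc 0 (exitTime V Y T)) :
    Y t ∈ V := by
  have hbefore : ∀ s ∈ Ico 0 (exitTime V Y T), Y s ∈ V := fun s hs => by
    by_contra h
    exact hs.2.not_ge
      (csInf_le bddBelow_exitTime_set (Or.inl ⟨⟨hs.1, hs.2.le.trans exitTime_le⟩, h⟩))
  rcases ht.1.eq_or_lt with rfl | hpos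
  · exact hY0
  have hcl : t ∈ closure (Ico 0 (exitTime V Y T)) := by
    rwa [closure_Ico (hpos.trans_le ht.2).ne]
  have hYt := ((hY t ⟨ht.1, ht.2.trans exitTime_le⟩).mono
    fun s hs => ⟨hs.1, hs.2.le.trans exitTime_le⟩).mem_closure_image hcl
  exact hV.closure_subset_iff.2 (image_subset_iff.2 hbefore) hYt

end exitTime

def F2 (p β c : ℝ) (z : ℝ × ℝ) : ℝ :=
  2 * p * (p - 1) + 2 * p * z.1 * (p * z.1 - β * z.2) + c * z.2

theorem F2L_eq (p β Λ : ℝ) : F2L p β Λ = F2 p β (-2 * (p - 1) - 2 * β * Λ) := by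
  funext z; simp only [F2L, F2]; ring

theorem F2U_eq (p β Λ : ℝ) : F2U p β Λ = F2 p β (-2 * (p - 1) + 2 * β * Λ) := by
  funext z; simp only [F2U, F2]; ring

theorem F1_sub_le {p β η : ℝ} (hp : 0 ≤ p) (hβ : 0 ≤ β) (hη : 0 ≤ η) {y z : ℝ × ℝ}
    (h₁ : y.1 - z.1 = η) (h₂ : y.2 - z.2 ≤ η) : F1 p β y - F1 p β z ≤ β * η := by
  have : F1 p β y - F1 p β z = -p * (y.1 - z.1) + β * (y.2 - z.2) := by simp only [F1]; ring
  nlinarith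

theorem Prod.abs_le_of_norm_le {x : ℝ × ℝ} {M : ℝ} (h : ‖x‖ ≤ M) : |x.1| ≤ M ∧ |x.2| ≤ M :=
  ⟨(norm_fst_le x).trans h, (norm_snd_le x).trans h⟩

theorem F2_sub_le {p β c C M η : ℝ} (hp : 0 ≤ p) (hβ : 0 ≤ β) (hC : 0 ≤ C) (hη : 0 ≤ η)
    {y z : ℝ × ℝ} (hy : ‖y‖ ≤ M) (hz : ‖z‖ ≤ M) (h₁ : y.1 - z.1 ≤ η) (h₂ : y.2 - z.2 = η)
    (hreg : β * y.2 ≤ 2 * p * y.1 + C * η) :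
    F2 p β c y - F2 p β c z ≤ (|c| + 2 * p * β * M + 2 * p * (2 * p + β + 2 * C) * M) * η := by
  obtain ⟨hy₁, hy₂⟩ := Prod.abs_le_of_norm_le hy
  obtain ⟨hz₁, -⟩ := Prod.abs_le_of_norm_le hz
  rw [abs_le] at hy₁ hy₂ hz₁
  set δ := y.1 - z.1
  set B := p * (y.1 + z.1) - β * y.2
  have hsplit : F2 p β c y - F2 p β c z = (c - 2 * p * β * z.1) * η + 2 * p * (δ * B) := by
    simp only [F2, δ, B]; rw [← h₂]; ring
  have hlin : (c - 2 * p * β * z.1) * η ≤ (|c| + 2 * p * β * M) * η := by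
    have := le_abs_self c
    have : -(2 * p * β * z.1) ≤ 2 * p * β * M := by nlinarith [mul_nonneg hp hβ]
    exact mul_le_mul_of_nonneg_right (by linarith) hη
  -- `2pu - βv ≥ 0` on `V₋` makes `F2` increasing in `u`; `hreg` is that inequality up to `Cη`
  have hquad : δ * B ≤ (2 * p + β + 2 * C) * M * η := by
    have hM : 0 ≤ M := (norm_nonneg y).trans hy
    have hCMη : 0 ≤ C * M * η := by positivity
    have hpβMη : 0 ≤ (2 * p + β) * M * η := by positivity
    rcases le_total 0 δ with hδ | hδ
    · have hB : B ≤ (2 * p + β) * M := by nlinarith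
      rcases le_total B 0 with hB0 | hB0
      · nlinarith [mul_nonpos_of_nonneg_of_nonpos hδ hB0]
      · nlinarith [mul_le_mul_of_nonneg_right h₁ hB0, mul_le_mul_of_nonneg_left hB hη]
    · have hB : -p * δ - C * η ≤ B := by simp only [δ, B]; linarith
      have hδM : -δ ≤ 2 * M := by simp only [δ]; linarith
      nlinarith [mul_le_mul_of_nonpos_left hB hδ, mul_le_mul_of_nonneg_left hδM (mul_nonneg hC hη),
        mul_nonneg hp (sq_nonneg δ)]
  rw [hsplit]
  nlinarith

theorem isClosed_Vminus (p β : ℝ) : IsClosed (Vminus p β) :=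
  (isClosed_le continuous_const continuous_fst).inter <|
    (isClosed_le continuous_const continuous_snd).inter <|
      isClosed_le continuous_snd (by fun_prop)

theorem mul_snd_le_of_mem_Vminus {p β : ℝ} (hβ : 0 < β) {z : ℝ × ℝ} (hz : z ∈ Vminus p β) :
    β * z.2 ≤ 2 * p * z.1 := by
  have := hz.2.2
  rwa [le_div_iff₀ hβ, mul_comm] at this

def IsSubsolutionOn (p β c S : ℝ) (Y Y' : ℝ → ℝ × ℝ) : Prop :=
  ∀ t ∈ Icc 0 S, HasDerivWithinAt Y (Y' t) (Icc 0 S) t ∧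
    (Y' t).1 = F1 p β (Y t) ∧ (Y' t).2 ≤ F2 p β c (Y t)

def IsSupersolutionOn (p β c S : ℝ) (Y Y' : ℝ → ℝ × ℝ) : Prop :=
  ∀ t ∈ Icc 0 S, HasDerivWithinAt Y (Y' t) (Icc 0 S) t ∧
    (Y' t).1 = F1 p β (Y t) ∧ F2 p β c (Y t) ≤ (Y' t).2

section Solutions

variable {p β c S S' : ℝ} {Y Y' : ℝ → ℝ × ℝ}

theorem IsSubsolutionOn.mono (h : IsSubsolutionOn p β c S Y Y') (hS : S' ≤ S) :
    IsSubsolutionOn p β c S' Y Y' := fun t ht =>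
  have hsub := Icc_subset_Icc_right hS
  let ⟨hd, h₁, h₂⟩ := h t (hsub ht)
  ⟨hd.mono hsub, h₁, h₂⟩

theorem IsSupersolutionOn.mono (h : IsSupersolutionOn p β c S Y Y') (hS : S' ≤ S) :
    IsSupersolutionOn p β c S' Y Y' := fun t ht =>
  have hsub := Icc_subset_Icc_right hS
  let ⟨hd, h₁, h₂⟩ := h t (hsub ht)
  ⟨hd.mono hsub, h₁, h₂⟩

theorem IsSubsolutionOn.continuousOn (h : IsSubsolutionOn p β c S Y Y') :
    ContinuousOn Y (Icc 0 S) := fun t ht => (h t ht).1.continuousWithinAt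

theorem IsSupersolutionOn.continuousOn (h : IsSupersolutionOn p β c S Y Y') :
    ContinuousOn Y (Icc 0 S) := fun t ht => (h t ht).1.continuousWithinAt

end Solutions

theorem le_of_isSubsolutionOn_of_isSupersolutionOn {ι : Type*} [Finite ι] {p β C S : ℝ}
    (hp : 0 ≤ p) (hβ : 0 ≤ β) (hC : 0 ≤ C) {c : ι → ℝ} {Y Y' Z Z' : ι → ℝ → ℝ × ℝ}
    (hY : ∀ i, IsSubsolutionOn p β (c i) S (Y i) (Y' i))
    (hZ : ∀ i, IsSupersolutionOn p β (c i) S (Z i) (Z' i)) (h0 : ∀ i, Y i 0 ≤ Z i 0)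
    (hreg : ∀ t ∈ Icc 0 S, ∀ η > 0, (∀ j, Y j t ≤ Z j t + (η, η)) →
      ∀ i, β * (Y i t).2 ≤ 2 * p * (Y i t).1 + C * η) :
    ∀ t ∈ Icc 0 S, ∀ i, Y i t ≤ Z i t := by
  have : Fintype ι := Fintype.ofFinite ι
  obtain ⟨M, hM⟩ := isCompact_Icc.exists_bound_of_forall_continuousOn
    (f := Sum.elim Y Z) (Sum.forall.2 ⟨fun i => (hY i).continuousOn, fun i => (hZ i).continuousOn⟩)
  set L := β + ∑ i, |c i| + 2 * p * β * M + 2 * p * (2 * p + β + 2 * C) * M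
  have key := nonpos_of_hasDerivWithinAt_of_touch (L := L)
    (φ := Sum.elim (fun i t => (Y i t).1 - (Z i t).1) (fun i t => (Y i t).2 - (Z i t).2))
    (φ' := Sum.elim (fun i t => (Y' i t).1 - (Z' i t).1) (fun i t => (Y' i t).2 - (Z' i t).2))
    (by
      rintro (i | i) t ht
      · exact (hY i t ht).1.fst.sub (hZ i t ht).1.fst
      · exact (hY i t ht).1.snd.sub (hZ i t ht).1.snd)
    (by
      rintro (i | i) <;> simp only [Sum.elim_inl, Sum.elim_inr, sub_nonpos]
      exacts [(h0 i).1, (h0 i).2])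
    (by
      intro t ht η hη k hk hgap
      simp only [Sum.forall, Sum.elim_inl, Sum.elim_inr] at hgap
      have hgap' : ∀ j, Y j t ≤ Z j t + (η, η) := fun j =>
        ⟨by simp only [Prod.fst_add]; linarith [hgap.1 j],
          by simp only [Prod.snd_add]; linarith [hgap.2 j]⟩
      rcases k with i | i <;> simp only [Sum.elim_inl, Sum.elim_inr] at hk ⊢
      · have hM0 : 0 ≤ M := (norm_nonneg _).trans (hM (.inl i) t ht)
        have hβL : β ≤ L := by
          have := Finset.sum_nonneg fun j (_ : j ∈ Finset.univ) => abs_nonneg (c j)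
          have : 0 ≤ 2 * p * β * M + 2 * p * (2 * p + β + 2 * C) * M := by positivity
          linarith
        rw [(hY i t ht).2.1, (hZ i t ht).2.1]
        calc _ ≤ β * η := F1_sub_le hp hβ hη.le hk (hgap.2 i)
          _ ≤ L * η := by gcongr
      · calc (Y' i t).2 - (Z' i t).2 ≤ F2 p β (c i) (Y i t) - F2 p β (c i) (Z i t) := by
              linarith [(hY i t ht).2.2, (hZ i t ht).2.2]
          _ ≤ (|c i| + 2 * p * β * M + 2 * p * (2 * p + β + 2 * C) * M) * η :=
              F2_sub_le hp hβ hC hη.le (hM (.inl i) t ht) (hM (.inr i) t ht) (hgap.1 i) hk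
                (hreg t ht η hη hgap' i)
          _ ≤ L * η := by
              gcongr
              linarith [Finset.single_le_sum (fun j _ => abs_nonneg (c j)) (Finset.mem_univ i)])
  exact fun t ht i => ⟨sub_nonpos.1 (key t ht (.inl i)), sub_nonpos.1 (key t ht (.inr i))⟩

section Bounding

variable {p β Λ T : ℝ}

theorem CondI.isSupersolutionOn {X X' : ℝ → ℝ × ℝ} (h : CondI p β Λ T X X') :
    IsSupersolutionOn p β (-2 * (p - 1) - 2 * β * Λ) T X X' := fun t ht =>
  ⟨h.1 t ht, h.2.2.1 t ht, F2L_eq p β Λ ▸ (h.2.2.2 t ht).1⟩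

theorem CondI.isSubsolutionOn {X X' : ℝ → ℝ × ℝ} (h : CondI p β Λ T X X') :
    IsSubsolutionOn p β (-2 * (p - 1) + 2 * β * Λ) T X X' := fun t ht =>
  ⟨h.1 t ht, h.2.2.1 t ht, F2U_eq p β Λ ▸ (h.2.2.2 t ht).2⟩

theorem isSubsolutionOn_of_hasDerivWithinAt_PhiL {AL : ℝ → ℝ × ℝ}
    (h : ∀ t ∈ Icc (0 : ℝ) T, HasDerivWithinAt AL (PhiL p β Λ (AL t)) (Icc (0 : ℝ) T) t) :
    IsSubsolutionOn p β (-2 * (p - 1) - 2 * β * Λ) T AL fun t => PhiL p β Λ (AL t) :=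
  fun t ht => ⟨h t ht, rfl, F2L_eq p β Λ ▸ le_rfl⟩

theorem isSupersolutionOn_of_hasDerivWithinAt_PhiU {AU : ℝ → ℝ × ℝ}
    (h : ∀ t ∈ Icc (0 : ℝ) T, HasDerivWithinAt AU (PhiU p β Λ (AU t)) (Icc (0 : ℝ) T) t) :
    IsSupersolutionOn p β (-2 * (p - 1) + 2 * β * Λ) T AU fun t => PhiU p β Λ (AU t) :=
  fun t ht => ⟨h t ht, rfl, F2U_eq p β Λ ▸ le_rfl⟩

end Bounding

section Comparison

variable {p β c T : ℝ} {Y Y' Z Z' : ℝ → ℝ × ℝ}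

theorem le_of_isSubsolutionOn_of_isSupersolutionOn_of_le_exitTime (hp : 0 ≤ p) (hβ : 0 < β)
    (hY : IsSubsolutionOn p β c T Y Y') (hZ : IsSupersolutionOn p β c T Z Z') (h0 : Y 0 = Z 0)
    (hY0 : Y 0 ∈ Vminus p β) {S : ℝ} (hS : S ≤ exitTime (Vminus p β) Y T) :
    ∀ t ∈ Icc 0 S, Y t ≤ Z t := by
  have hST := hS.trans exitTime_le
  have hle := le_of_isSubsolutionOn_of_isSupersolutionOn (ι := Unit) (C := 0) hp hβ.le le_rfl
    (fun _ => hY.mono hST) (fun _ => hZ.mono hST) (fun _ => h0.le) fun t ht η _ _ _ => by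
      have hYV := mem_of_mem_Icc_exitTime (isClosed_Vminus p β) hY.continuousOn hY0
        ⟨ht.1, ht.2.trans hS⟩
      simpa using mul_snd_le_of_mem_Vminus hβ hYV
  exact fun t ht => hle t ht ()

theorem le_and_le_of_mem_Icc_exitTime_mixed {cL cU : ℝ} (hp : 0 ≤ p) (hβ : 0 < β)
    {AL AL' X X' AU AU' : ℝ → ℝ × ℝ} (hAL : IsSubsolutionOn p β cL T AL AL')
    (hXL : IsSupersolutionOn p β cL T X X') (hXU : IsSubsolutionOn p β cU T X X')
    (hAU : IsSupersolutionOn p β cU T AU AU') (hAL0 : AL 0 = X 0) (hAU0 : AU 0 = X 0)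
    (hX0 : X 0 ∈ Vminus p β) :
    ∀ t ∈ Icc 0 (exitTime (Vminus p β) (fun t => ((AL t).1, (AU t).2)) T),
      AL t ≤ X t ∧ X t ≤ AU t := by
  set S := exitTime (Vminus p β) (fun t => ((AL t).1, (AU t).2)) T
  have hST : S ≤ T := exitTime_le
  have hle := le_of_isSubsolutionOn_of_isSupersolutionOn (C := 2 * p + 2 * β) (c := ![cL, cU])
    (Y := ![AL, X]) (Y' := ![AL', X']) (Z := ![X, AU]) (Z' := ![X', AU']) hp hβ.le (by positivity)
    (Fin.forall_fin_two.2 ⟨hAL.mono hST, hXU.mono hST⟩)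
    (Fin.forall_fin_two.2 ⟨hXL.mono hST, hAU.mono hST⟩)
    (Fin.forall_fin_two.2 ⟨hAL0.le, hAU0.ge⟩) fun t ht η hη hgap => by
      have hbox := mul_snd_le_of_mem_Vminus hβ <|
        mem_of_mem_Icc_exitTime (isClosed_Vminus p β) (hAL.continuousOn.fst.prodMk
          hAU.continuousOn.snd) (by simpa [hAL0, hAU0] using hX0) ht
      obtain ⟨⟨hL₁, hL₂⟩, ⟨hU₁, hU₂⟩⟩ := And.intro (hgap 0) (hgap 1)
      simp only [Matrix.cons_val_zero, Matrix.cons_val_one, Prod.fst_add, Prod.snd_add]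
        at hL₁ hL₂ hU₁ hU₂
      refine Fin.forall_fin_two.2 ⟨?_, ?_⟩ <;>
        simp only [Matrix.cons_val_zero, Matrix.cons_val_one] <;> nlinarith
  exact fun t ht => ⟨hle t ht 0, hle t ht 1⟩

end Comparison

theorem pointwise_comparison_general
    (p β Λ T : ℝ) (hp : 2 < p) (hβ : 0 < β)
    (X X' : ℝ → ℝ × ℝ) (hXI : CondI p β Λ T X X')
    (hX0 : X 0 ∈ interior (Vminus p β))
    (AL AU : ℝ → ℝ × ℝ)
    (hAL : ∀ t ∈ Icc (0 : ℝ) T, HasDerivWithinAt AL (PhiL p β Λ (AL t)) (Icc (0 : ℝ) T) t)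
    (hAU : ∀ t ∈ Icc (0 : ℝ) T, HasDerivWithinAt AU (PhiU p β Λ (AU t)) (Icc (0 : ℝ) T) t)
    (hAL0 : AL 0 = X 0) (hAU0 : AU 0 = X 0) :
    ((∀ t ∈ Icc (0 : ℝ)
        (min (sInf ({t ∈ Icc (0 : ℝ) T | AL t ∉ Vminus p β} ∪ {T}))
             (sInf ({t ∈ Icc (0 : ℝ) T | X t ∉ Vminus p β} ∪ {T}))),
        (AL t).1 ≤ (X t).1 ∧ (AL t).2 ≤ (X t).2) ∧
     (∀ t ∈ Icc (0 : ℝ)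
        (min (sInf ({t ∈ Icc (0 : ℝ) T | AU t ∉ Vminus p β} ∪ {T}))
             (sInf ({t ∈ Icc (0 : ℝ) T | X t ∉ Vminus p β} ∪ {T}))),
        (X t).1 ≤ (AU t).1 ∧ (X t).2 ≤ (AU t).2)) ∧
    (∀ t ∈ Icc (0 : ℝ)
        (sInf ({t ∈ Icc (0 : ℝ) T | ((AL t).1, (AU t).2) ∉ Vminus p β} ∪ {T})),
        ((AL t).1 ≤ (X t).1 ∧ (AL t).2 ≤ (X t).2) ∧
        ((X t).1 ≤ (AU t).1 ∧ (X t).2 ≤ (AU t).2)) := by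
  have hp₀ : 0 ≤ p := by linarith
  have hXV : X 0 ∈ Vminus p β := interior_subset hX0
  have hALs := isSubsolutionOn_of_hasDerivWithinAt_PhiL hAL
  have hAUs := isSupersolutionOn_of_hasDerivWithinAt_PhiU hAU
  refine ⟨⟨fun t ht => ?_, fun t ht => ?_⟩, fun t ht => ?_⟩
  · exact le_of_isSubsolutionOn_of_isSupersolutionOn_of_le_exitTime hp₀ hβ hALs
      hXI.isSupersolutionOn hAL0 (hAL0 ▸ hXV) (min_le_left _ _) t ht
  · exact le_of_isSubsolutionOn_of_isSupersolutionOn_of_le_exitTime hp₀ hβ hXI.isSubsolutionOn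
      hAUs hAU0.symm hXV (min_le_right _ _) t ht
  · exact le_and_le_of_mem_Icc_exitTime_mixed hp₀ hβ hALs hXI.isSupersolutionOn
      hXI.isSubsolutionOn hAUs hAL0 hAU0 hXV t ht

/-- **Pointwise comparison with the bounding flows.** If `X` satisfies Condition I with
`X 0` in the interior of `V₋`, and `A_L`, `A_U` solve the lower/upper bounding ODEs with
the same initial condition, then (1) `X ≥ A_L` componentwise up to `min(τᴸ, τ)` and
`X ≤ A_U` componentwise up to `min(τᵁ, τ)`; (2) `A_L ≤ X ≤ A_U` componentwise up to
`τ^□`, where `τ, τᴸ, τᵁ, τ^□` are the exit times from `V₋` of `X`, `A_L`, `A_U` and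
`(A_{L,1}, A_{U,2})` respectively (taken to be `T` if there is no exit). -/
theorem pointwise_comparison
    (p β Λ T : ℝ) (hp : 2 < p) (hβ : 0 < β) (hΛ : 0 < Λ) (hT : 0 < T)
    (X X' : ℝ → ℝ × ℝ) (hXI : CondI p β Λ T X X')
    (hX0 : X 0 ∈ interior (Vminus p β))
    (AL AU : ℝ → ℝ × ℝ)
    (hAL : ∀ t ∈ Icc (0 : ℝ) T, HasDerivWithinAt AL (PhiL p β Λ (AL t)) (Icc (0 : ℝ) T) t)
    (hAU : ∀ t ∈ Icc (0 : ℝ) T, HasDerivWithinAt AU (PhiU p β Λ (AU t)) (Icc (0 : ℝ) T) t)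
    (hAL0 : AL 0 = X 0) (hAU0 : AU 0 = X 0) :
    ((∀ t ∈ Icc (0 : ℝ)
        (min (sInf ({t ∈ Icc (0 : ℝ) T | AL t ∉ Vminus p β} ∪ {T}))
             (sInf ({t ∈ Icc (0 : ℝ) T | X t ∉ Vminus p β} ∪ {T}))),
        (AL t).1 ≤ (X t).1 ∧ (AL t).2 ≤ (X t).2) ∧
     (∀ t ∈ Icc (0 : ℝ)
        (min (sInf ({t ∈ Icc (0 : ℝ) T | AU t ∉ Vminus p β} ∪ {T}))
             (sInf ({t ∈ Icc (0 : ℝ) T | X t ∉ Vminus p β} ∪ {T}))),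
        (X t).1 ≤ (AU t).1 ∧ (X t).2 ≤ (AU t).2)) ∧
    (∀ t ∈ Icc (0 : ℝ)
        (sInf ({t ∈ Icc (0 : ℝ) T | ((AL t).1, (AU t).2) ∉ Vminus p β} ∪ {T})),
        ((AL t).1 ≤ (X t).1 ∧ (AL t).2 ≤ (X t).2) ∧
        ((X t).1 ≤ (AU t).1 ∧ (X t).2 ≤ (AU t).2)) :=
  pointwise_comparison_general p β Λ T hp hβ X X' hXI hX0 AL AU hAL hAU hAL0 hAU0
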